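/- Let p : [0,∞) → ℝ be integrable and of bounded variation on [0,∞), with total variation V(p). Then for every l ∈ ℕ, l ≥ 1, there exists a function p_l : [0,∞) → ℝ that is constant on each interval [i/l, (i+1)/l), i ∈ ℕ, such that ∫_{[0,∞)} |p_l − p| dx ≤ V(p)/l. -/

import Mathlib

/-!
Take `p_l x = p (⌊l x⌋ / l)`, the value of `p` at the left endpoint of the cell containing `x`.
On the cell `[i/l, (i+1)/l)` the error `|p_l - p|` is at most the variation `V_i` of `p` on
`[i/l, (i+1)/l]`, so the integral over the cell is at most `V_i / l`. The variations over
consecutive cells add up to at most `V(p)`.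
-/

open MeasureTheory Set Filter

section eVariation

variable {α E : Type*} [LinearOrder α] [PseudoEMetricSpace E]

theorem eVariationOn.sum_range_Icc_add_one {f : α → E} {a : ℕ → α} (ha : Monotone a) (n : ℕ) :
    ∑ i ∈ Finset.range n, eVariationOn f (Icc (a i) (a (i + 1))) =
      eVariationOn f (Icc (a 0) (a n)) := by
  induction n with
  | zero => simp [eVariationOn.subsingleton]
  | succ n ih =>
    rw [Finset.sum_range_succ, ih]
    simpa using eVariationOn.Icc_add_Icc f (s := univ) (ha (Nat.zero_le n))
      (ha n.le_succ) (mem_univ _)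

theorem eVariationOn.tsum_Icc_add_one_le {f : α → E} {a : ℕ → α} (ha : Monotone a) :
    ∑' i, eVariationOn f (Icc (a i) (a (i + 1))) ≤ eVariationOn f (Ici (a 0)) := by
  refine ENNReal.tsum_le_of_sum_range_le fun n => ?_
  rw [eVariationOn.sum_range_Icc_add_one ha]
  exact eVariationOn.mono f Icc_subset_Ici_self

end eVariation

theorem Monotone.iUnion_Ico_add_one_eq_Ici {β : Type*} [LinearOrder β] {a : ℕ → β}
    (ha : Monotone a) (h_unbdd : ¬BddAbove (range a)) :
    ⋃ i, Ico (a i) (a (i + 1)) = Ici (a 0) := by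
  simpa using iUnion_Ico_map_succ_eq_Ici (fun i => ha (Nat.zero_le i)) h_unbdd

theorem Monotone.pairwise_disjoint_on_Ico_add_one {β : Type*} [Preorder β] {a : ℕ → β}
    (ha : Monotone a) : Pairwise (Function.onFun Disjoint fun i => Ico (a i) (a (i + 1))) := by
  simpa using ha.pairwise_disjoint_on_Ico_succ

theorem setLIntegral_Ici_edist_le_mul_eVariationOn {E : Type*} [PseudoEMetricSpace E]
    {f g : ℝ → E} {a : ℕ → ℝ} {δ : ℝ} (ha : Monotone a) (h_unbdd : ¬BddAbove (range a))
    (hmesh : ∀ i, a (i + 1) - a i ≤ δ) (hg : ∀ i, ∀ x ∈ Ico (a i) (a (i + 1)), g x = f (a i)) :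
    ∫⁻ x in Ici (a 0), edist (g x) (f x) ≤ ENNReal.ofReal δ * eVariationOn f (Ici (a 0)) := by
  set V : ℕ → ENNReal := fun i => eVariationOn f (Icc (a i) (a (i + 1)))
  have hcell : ∀ i,
      ∫⁻ x in Ico (a i) (a (i + 1)), edist (g x) (f x) ≤ ENNReal.ofReal δ * V i := by
    intro i
    calc ∫⁻ x in Ico (a i) (a (i + 1)), edist (g x) (f x)
        ≤ ∫⁻ _ in Ico (a i) (a (i + 1)), V i := by
          refine setLIntegral_mono' measurableSet_Ico fun x hx => ?_
          rw [hg i x hx]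
          exact eVariationOn.edist_le f ⟨le_rfl, ha i.le_succ⟩ (Ico_subset_Icc_self hx)
      _ = ENNReal.ofReal (a (i + 1) - a i) * V i := by
          rw [setLIntegral_const, Real.volume_Ico, mul_comm]
      _ ≤ ENNReal.ofReal δ * V i := by gcongr; exact hmesh i
  calc ∫⁻ x in Ici (a 0), edist (g x) (f x)
      = ∑' i, ∫⁻ x in Ico (a i) (a (i + 1)), edist (g x) (f x) := by
        rw [← ha.iUnion_Ico_add_one_eq_Ici h_unbdd]
        exact lintegral_iUnion (fun _ => measurableSet_Ico) ha.pairwise_disjoint_on_Ico_add_one _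
    _ ≤ ∑' i, ENNReal.ofReal δ * V i := ENNReal.tsum_le_tsum hcell
    _ = ENNReal.ofReal δ * ∑' i, V i := ENNReal.tsum_mul_left
    _ ≤ ENNReal.ofReal δ * eVariationOn f (Ici (a 0)) := by
        gcongr; exact eVariationOn.tsum_Icc_add_one_le ha

theorem Nat.floor_mul_eq_of_mem_Ico {K : Type*} [Field K] [LinearOrder K] [IsStrictOrderedRing K]
    [FloorSemiring K] {l : K} (hl : 0 < l) {i : ℕ} {x : K} (hx : x ∈ Ico (i / l) ((i + 1) / l)) :
    ⌊x * l⌋₊ = i := by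
  rw [mem_Ico, div_le_iff₀ hl, lt_div_iff₀ hl] at hx
  exact (Nat.floor_eq_iff (i.cast_nonneg.trans hx.1)).2 hx

theorem step_approximation_of_boundedVariation
    (p : ℝ → ℝ)
    (l : ℕ) (hl : 1 ≤ l) :
    ∃ pl : ℝ → ℝ,
      (∀ i : ℕ, ∀ x ∈ Set.Ico ((i : ℝ) / l) (((i : ℝ) + 1) / l),
        ∀ y ∈ Set.Ico ((i : ℝ) / l) (((i : ℝ) + 1) / l), pl x = pl y) ∧
      (∫⁻ x in Set.Ici (0 : ℝ), ENNReal.ofReal |pl x - p x|)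
        ≤ eVariationOn p (Set.Ici (0 : ℝ)) / (l : ENNReal) := by
  have hl₀ : (0 : ℝ) < l := by exact_mod_cast hl
  have hfloor : ∀ (i : ℕ) (x : ℝ), x ∈ Ico ((i : ℝ) / l) ((i + 1) / l) → ⌊x * l⌋₊ = i :=
    fun _ _ => Nat.floor_mul_eq_of_mem_Ico hl₀
  refine ⟨fun x => p (⌊x * l⌋₊ / l),
    fun i x hx y hy => by simp only [hfloor i x hx, hfloor i y hy], ?_⟩
  have ha : Monotone fun i : ℕ => (i : ℝ) / l := fun _ _ hij =>
    div_le_div_of_nonneg_right (Nat.cast_le.2 hij) hl₀.le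
  have h_unbdd : ¬BddAbove (range fun i : ℕ => (i : ℝ) / l) :=
    not_bddAbove_of_tendsto_atTop (tendsto_natCast_atTop_atTop.atTop_div_const hl₀)
  have hbound := setLIntegral_Ici_edist_le_mul_eVariationOn (f := p)
    (g := fun x => p (⌊x * l⌋₊ / l)) (δ := 1 / l) ha h_unbdd
    (fun i => by rw [← sub_div]; push_cast; simp)
    (fun i x hx => by simp only [hfloor i x (by exact_mod_cast hx)])
  simp only [Nat.cast_zero, zero_div, edist_dist, Real.dist_eq] at hbound
  rwa [one_div, ENNReal.ofReal_inv_of_pos hl₀, ENNReal.ofReal_natCast, mul_comm,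
    ← div_eq_mul_inv] at hbound
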